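/- Let r ≥ 3 and 2 ≤ t ≤ (r+4)/4, and set n = 3r−t. If ρ_2(K(n,r)) ≥ 5, then there exists a 2-packing S of K(n,r) with |S| = 5 such that every element x ∈ [n] belongs to at most 2 of the sets in S. -/

import Mathlib

open Finset

/-- The vertex set of the Kneser graph `K(n,r)`: the `r`-element subsets of `[n] = {1,…,n}`. -/
def KneserVerts (n r : ℕ) : Finset (Finset ℕ) := (Finset.Icc 1 n).powersetCard r

/-- Adjacency in a Kneser graph: distinct disjoint sets. -/
def KneserAdj (u v : Finset ℕ) : Prop := u ≠ v ∧ Disjoint u v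

instance (u v : Finset ℕ) : Decidable (KneserAdj u v) := by
  unfold KneserAdj; infer_instance

/-- `D` is a `k`-dominating set of `K(n,r)`: every vertex outside `D` has at least
`k` neighbours in `D`. -/
def IsKDomSet (n r k : ℕ) (D : Finset (Finset ℕ)) : Prop :=
  D ⊆ KneserVerts n r ∧
    ∀ v ∈ KneserVerts n r, v ∉ D → k ≤ (D.filter fun u => KneserAdj v u).card

/-- `D` is a `k`-tuple dominating set of `K(n,r)`: every vertex has at least `k`
vertices of `D` in its closed neighbourhood. -/
def IsKTupleDomSet (n r k : ℕ) (D : Finset (Finset ℕ)) : Prop :=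
  D ⊆ KneserVerts n r ∧
    ∀ v ∈ KneserVerts n r, k ≤ (D.filter fun u => u = v ∨ KneserAdj v u).card

/-- `D` is a `k`-tuple total dominating set of `K(n,r)`: every vertex has at least
`k` neighbours in `D`. -/
def IsKTupleTotalDomSet (n r k : ℕ) (D : Finset (Finset ℕ)) : Prop :=
  D ⊆ KneserVerts n r ∧
    ∀ v ∈ KneserVerts n r, k ≤ (D.filter fun u => KneserAdj v u).card

/-- The `k`-domination number `γ_k(K(n,r))`. -/
noncomputable def kdomNum (n r k : ℕ) : ℕ :=
  sInf {m | ∃ D, IsKDomSet n r k D ∧ D.card = m}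

/-- The `k`-tuple domination number `γ_{×k}(K(n,r))`. -/
noncomputable def ktupleDomNum (n r k : ℕ) : ℕ :=
  sInf {m | ∃ D, IsKTupleDomSet n r k D ∧ D.card = m}

/-- The `k`-tuple total domination number `γ_{×k,t}(K(n,r))`. -/
noncomputable def ktupleTotalDomNum (n r k : ℕ) : ℕ :=
  sInf {m | ∃ D, IsKTupleTotalDomSet n r k D ∧ D.card = m}

/-- `S` is a 2-packing of `K(n,r)`: any two distinct members are neither adjacent
nor have a common neighbour (i.e. are at distance at least 3). -/
def IsTwoPacking (n r : ℕ) (S : Finset (Finset ℕ)) : Prop :=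
  S ⊆ KneserVerts n r ∧
    ∀ u ∈ S, ∀ v ∈ S, u ≠ v →
      ¬ KneserAdj u v ∧ ∀ w ∈ KneserVerts n r, ¬ (KneserAdj u w ∧ KneserAdj w v)

/-- The 2-packing number `ρ₂(K(n,r))`. -/
noncomputable def twoPackingNum (n r : ℕ) : ℕ :=
  sSup {m | ∃ S, IsTwoPacking n r S ∧ S.card = m}

/-- A clique in a Kneser graph: a family of pairwise disjoint sets. -/
def IsKneserClique (D : Finset (Finset ℕ)) : Prop :=
  ∀ u ∈ D, ∀ v ∈ D, u ≠ v → Disjoint u v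

/-! If `2r + 10 > 9t`, a 2-packing of `K(3r - t, r)` has pairwise intersections of size at most
`t - 1`, so by Bonferroni's inequality five of its members would cover at least
`5r - 10(t - 1) > 3r - t` points; hence `ρ₂ ≤ 4` and the hypothesis forces `2r + 10 ≤ 9t`.
In that range take `c = t - 1` points labelled by each pair `{i, j}` of five indices and
`p = r - 4c` points labelled by each single index `i` (encoded as the loop `s(i, i)`), and let
`A i` consist of the points whose label contains `i`: the `A i` are `r`-sets meeting pairwise in
exactly `c` points, they fit into `[3r - t]`, and every point lies in at most two of them. -/

theorem Finset.card_mul_le_card_biUnion_add_choose_two_mul {α : Type*} [DecidableEq α]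
    {F : Finset (Finset α)} {r k : ℕ} (hF : ∀ A ∈ F, A.card = r)
    (hk : ∀ A ∈ F, ∀ B ∈ F, A ≠ B → (A ∩ B).card ≤ k) :
    F.card * r ≤ (F.biUnion id).card + F.card.choose 2 * k := by
  induction F using Finset.induction_on with
  | empty => simp
  | insert A F hA ih =>
    have hAr : A.card = r := hF A (mem_insert_self A F)
    have hFk : (A ∩ F.biUnion id).card ≤ F.card * k := by
      rw [inter_biUnion]
      refine card_biUnion_le.trans (sum_le_card_nsmul _ _ _ fun B hB => ?_)
      exact hk A (mem_insert_self A F) B (mem_insert_of_mem hB) (ne_of_mem_of_not_mem hB hA).symm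
    have ih' := ih (fun B hB => hF B (mem_insert_of_mem hB))
      (fun B hB C hC => hk B (mem_insert_of_mem hB) C (mem_insert_of_mem hC))
    have hunion := card_union_add_card_inter A (F.biUnion id)
    rw [biUnion_insert, card_insert_of_notMem hA, Nat.choose_succ_succ', Nat.choose_one_right]
    simp only [id] at hunion ⊢
    linarith

theorem mem_kneserVerts {n r : ℕ} {u : Finset ℕ} :
    u ∈ KneserVerts n r ↔ u ⊆ Icc 1 n ∧ u.card = r :=
  mem_powersetCard

theorem isTwoPacking_pair_iff {n r : ℕ} {u v : Finset ℕ} (hu : u ∈ KneserVerts n r)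
    (hv : v ∈ KneserVerts n r) (huv : u ≠ v) :
    (¬ KneserAdj u v ∧ ∀ w ∈ KneserVerts n r, ¬ (KneserAdj u w ∧ KneserAdj w v)) ↔
      (u ∩ v).Nonempty ∧ (u ∩ v).card + n < 3 * r := by
  rw [mem_kneserVerts] at hu hv
  have hunion := card_union_add_card_inter u v
  simp only [KneserAdj, huv, ne_eq, not_false_eq_true, true_and,
    ← not_disjoint_iff_nonempty_inter, and_congr_right_iff]
  intro huv'
  constructor
  · intro hw
    by_contra! hlarge
    have hcompl : r ≤ (Icc 1 n \ (u ∪ v)).card := by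
      rw [card_sdiff_of_subset (union_subset hu.1 hv.1), Nat.card_Icc]
      omega
    obtain ⟨w, hw_sub, hw_card⟩ := exists_subset_card_eq hcompl
    have hw_disj : Disjoint u w ∧ Disjoint w v := by
      have := disjoint_of_subset_left hw_sub disjoint_sdiff_self_left
      rw [disjoint_union_right] at this
      exact ⟨this.1.symm, this.2⟩
    refine hw w (mem_kneserVerts.2 ⟨hw_sub.trans sdiff_subset, hw_card⟩)
      ⟨⟨?_, hw_disj.1⟩, ⟨?_, hw_disj.2⟩⟩
    · rintro rfl
      exact huv' hw_disj.2
    · rintro rfl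
      exact huv' hw_disj.1
  · rintro hsmall w hw ⟨⟨-, huw⟩, ⟨-, hwv⟩⟩
    rw [mem_kneserVerts] at hw
    have hdisj : Disjoint w (u ∪ v) := disjoint_union_right.2 ⟨huw.symm, hwv⟩
    have := card_le_card (union_subset hw.1 (union_subset hu.1 hv.1))
    rw [card_union_of_disjoint hdisj, Nat.card_Icc] at this
    omega

theorem isTwoPacking_iff {n r : ℕ} {S : Finset (Finset ℕ)} (hS : S ⊆ KneserVerts n r) :
    IsTwoPacking n r S ↔
      ∀ u ∈ S, ∀ v ∈ S, u ≠ v → (u ∩ v).Nonempty ∧ (u ∩ v).card + n < 3 * r := by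
  refine and_iff_right_of_imp (fun _ => hS) |>.trans (forall₂_congr fun u hu => ?_)
  exact forall₂_congr fun v hv => forall_congr' fun huv =>
    isTwoPacking_pair_iff (hS hu) (hS hv) huv

theorem IsTwoPacking.mono {n r : ℕ} {S T : Finset (Finset ℕ)} (hS : IsTwoPacking n r S)
    (hTS : T ⊆ S) : IsTwoPacking n r T :=
  ⟨hTS.trans hS.1, fun u hu v hv => hS.2 u (hTS hu) v (hTS hv)⟩

theorem IsTwoPacking.card_mul_le {n r : ℕ} {S : Finset (Finset ℕ)} (hS : IsTwoPacking n r S) :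
    S.card * r ≤ n + S.card.choose 2 * (3 * r - n - 1) := by
  have hsub := hS.1
  have hpair := (isTwoPacking_iff hsub).1 hS
  have hunion : (S.biUnion id).card ≤ n := by
    have := card_le_card (biUnion_subset.2 fun u hu => (mem_kneserVerts.1 (hsub hu)).1 :
      S.biUnion id ⊆ Icc 1 n)
    rwa [Nat.card_Icc, Nat.add_sub_cancel] at this
  have := card_mul_le_card_biUnion_add_choose_two_mul (k := 3 * r - n - 1)
    (fun u hu => (mem_kneserVerts.1 (hsub hu)).2)
    (fun u hu v hv huv => by have := (hpair u hu v hv huv).2; omega)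
  omega

theorem exists_isTwoPacking_card_eq_twoPackingNum (n r : ℕ) :
    ∃ S, IsTwoPacking n r S ∧ S.card = twoPackingNum n r :=
  Nat.sSup_mem (s := {m | ∃ S, IsTwoPacking n r S ∧ S.card = m})
    ⟨0, ∅, ⟨empty_subset _, by simp⟩, card_empty⟩
    ⟨(KneserVerts n r).card, by rintro _ ⟨S, hS, rfl⟩; exact card_le_card hS.1⟩

section Design

variable {m : ℕ} (c p : ℕ)

def labelMultiplicity (z : Sym2 (Fin m)) : ℕ := if z.IsDiag then p else c

abbrev LabelledPoint (m c p : ℕ) := Σ z : Sym2 (Fin m), Fin (labelMultiplicity c p z)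

def incidentPoints (i : Fin m) : Finset (LabelledPoint m c p) :=
  ({z | i ∈ z} : Finset (Sym2 (Fin m))).sigma fun _ => univ

variable {c p}

theorem mem_incidentPoints {i : Fin m} {x : LabelledPoint m c p} :
    x ∈ incidentPoints c p i ↔ i ∈ x.1 := by
  simp [incidentPoints]

theorem card_labelledPoint :
    Fintype.card (LabelledPoint m c p) = m.choose 2 * c + m * p := by
  simp only [Fintype.card_sigma, Fintype.card_fin]
  simp only [labelMultiplicity, sum_ite, sum_const, smul_eq_mul]
  rw [← Fintype.card_subtype, ← Fintype.card_subtype, Sym2.card_subtype_diag,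
    Sym2.card_subtype_not_diag, Fintype.card_fin]
  ring

theorem card_incidentPoints (i : Fin m) :
    (incidentPoints c p i).card = (m - 1) * c + p := by
  have hlabels : ({z | i ∈ z} : Finset (Sym2 (Fin m))) = univ.image fun j => s(i, j) := by
    ext z
    simp [Sym2.mem_iff_exists, eq_comm]
  rw [incidentPoints, card_sigma, hlabels, sum_image fun j _ k _ h => Sym2.congr_right.1 h]
  simp only [card_univ, Fintype.card_fin]
  simp only [labelMultiplicity, Sym2.mk_isDiag_iff, sum_ite, filter_eq, filter_ne, mem_univ,
    if_true, sum_const, card_singleton, card_erase_of_mem, card_univ, Fintype.card_fin,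
    smul_eq_mul]
  ring

theorem card_inter_incidentPoints {i j : Fin m} (hij : i ≠ j) :
    (incidentPoints c p i ∩ incidentPoints c p j).card = c := by
  have hinter : incidentPoints c p i ∩ incidentPoints c p j =
      ({s(i, j)} : Finset _).sigma fun _ => univ := by
    ext x
    simp [mem_incidentPoints, ← Sym2.mem_and_mem_iff hij]
  rw [hinter, card_sigma, sum_singleton, card_univ, Fintype.card_fin, labelMultiplicity,
    if_neg (Sym2.mk_isDiag_iff.not.2 hij)]

theorem card_filter_mem_incidentPoints_le_two (x : LabelledPoint m c p) :
    ({i | x ∈ incidentPoints c p i} : Finset (Fin m)).card ≤ 2 := by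
  obtain ⟨z, k⟩ := x
  induction z using Sym2.ind with
  | h a b =>
    refine (card_le_card (t := {a, b}) fun i hi => ?_).trans card_le_two
    simpa [mem_incidentPoints] using hi

end Design

theorem exists_isTwoPacking_of_family {α ι : Type*} [Fintype α] [DecidableEq α] [Fintype ι]
    {n r d : ℕ} (A : ι → Finset α) (hA : Function.Injective A) (hα : Fintype.card α ≤ n)
    (hcard : ∀ i, (A i).card = r)
    (hinter : ∀ i j, i ≠ j → (A i ∩ A j).Nonempty ∧ (A i ∩ A j).card + n < 3 * r)
    (hdepth : ∀ a, ({i | a ∈ A i} : Finset ι).card ≤ d) :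
    ∃ S : Finset (Finset ℕ), IsTwoPacking n r S ∧ S.card = Fintype.card ι ∧
      ∀ x, (S.filter fun u => x ∈ u).card ≤ d := by
  obtain ⟨e, he⟩ : ∃ e : α ↪ ℕ, ∀ a, e a ∈ Icc 1 n :=
    ⟨⟨fun a => Fintype.equivFin α a + 1, fun a b h =>
      (Fintype.equivFin α).injective (Fin.ext (Nat.succ_injective h))⟩,
      fun a => mem_Icc.2 ⟨Nat.le_add_left 1 _, (Fintype.equivFin α a).isLt.trans_le hα⟩⟩
  have hB : Function.Injective fun i => (A i).map e := fun i j h => hA (map_injective e h)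
  refine ⟨univ.image fun i => (A i).map e, (isTwoPacking_iff ?_).2 ?_,
    (card_image_of_injective _ hB).trans card_univ, fun x => ?_⟩
  · simp only [image_subset_iff, mem_univ, mem_kneserVerts, card_map, hcard, and_true,
      forall_const]
    intro i y hy
    obtain ⟨a, -, rfl⟩ := mem_map.1 hy
    exact he a
  · simp only [mem_image, mem_univ, true_and]
    rintro _ ⟨i, rfl⟩ _ ⟨j, rfl⟩ hij
    rw [← map_inter, card_map, map_nonempty]
    exact hinter i j fun h => hij (h ▸ rfl)
  · rw [filter_image]
    refine card_image_le.trans ?_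
    by_cases hx : ∃ a, e a = x
    · obtain ⟨a, rfl⟩ := hx
      simpa only [Function.comp_apply, mem_map' ] using hdepth a
    · simp [mem_map, not_exists.1 hx]

theorem exists_isTwoPacking_card_eq_depth_le_two {n r m c p : ℕ} (hc : 0 < c) (hcr : c < r)
    (hr : r = (m - 1) * c + p) (hn : m.choose 2 * c + m * p ≤ n) (hcn : c + n < 3 * r) :
    ∃ S : Finset (Finset ℕ), IsTwoPacking n r S ∧ S.card = m ∧
      ∀ x, (S.filter fun u => x ∈ u).card ≤ 2 := by
  have hcard : ∀ i : Fin m, (incidentPoints c p i).card = r :=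
    fun i => (card_incidentPoints i).trans hr.symm
  have hinj : Function.Injective (incidentPoints c p : Fin m → _) := by
    intro i j h
    by_contra hij
    have := card_inter_incidentPoints (c := c) (p := p) hij
    rw [h, inter_self, hcard] at this
    omega
  simpa using exists_isTwoPacking_of_family _ hinj (card_labelledPoint.trans_le hn) hcard
    (fun i j hij => by
      rw [← card_pos, card_inter_incidentPoints hij]
      exact ⟨hc, hcn⟩)
    card_filter_mem_incidentPoints_le_two

theorem stmt_15_general (r t : ℕ) (ht2 : 2 ≤ t) (ht : 4 * t ≤ r + 4)
    (hp : 5 ≤ twoPackingNum (3 * r - t) r) :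
    ∃ S : Finset (Finset ℕ), IsTwoPacking (3 * r - t) r S ∧ S.card = 5 ∧
      ∀ x ∈ Finset.Icc 1 (3 * r - t), (S.filter fun u => x ∈ u).card ≤ 2 := by
  have hrt : 2 * r + 10 ≤ 9 * t := by
    obtain ⟨S, hS, hS_card⟩ := exists_isTwoPacking_card_eq_twoPackingNum (3 * r - t) r
    obtain ⟨T, hTS, hT_card⟩ := exists_subset_card_eq (hp.trans hS_card.ge)
    have := (hS.mono hTS).card_mul_le
    rw [hT_card, show Nat.choose 5 2 = 10 from rfl] at this
    omega
  obtain ⟨S, hS, hS_card, hS_depth⟩ := exists_isTwoPacking_card_eq_depth_le_two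
    (n := 3 * r - t) (r := r) (m := 5) (c := t - 1) (p := r - 4 * (t - 1))
    (by omega) (by omega) (by omega) (by rw [show Nat.choose 5 2 = 10 from rfl]; omega) (by omega)
  exact ⟨S, hS, hS_card, fun x _ => hS_depth x⟩

theorem stmt_15 (r t : ℕ) (hr : 3 ≤ r) (ht2 : 2 ≤ t) (ht : 4 * t ≤ r + 4)
    (hp : 5 ≤ twoPackingNum (3 * r - t) r) :
    ∃ S : Finset (Finset ℕ), IsTwoPacking (3 * r - t) r S ∧ S.card = 5 ∧
      ∀ x ∈ Finset.Icc 1 (3 * r - t), (S.filter fun u => x ∈ u).card ≤ 2 :=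
  stmt_15_general r t ht2 ht hp
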